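/- arXiv:2102.13310 — 2 statements merged into one kernel-verified Lean document; each statement's English description precedes it below -/
import Mathlib

section
/- (Abstract form of Lemma 4.3.) For an abstract execution as in the context, assume additionally that any two distinct write operations possessing timestamps have distinct timestamps. Then the relation ↝ defined by Definition 4 is a strict partial order on operations: it is irreflexive, asymmetric, and transitive. -/
/-- The relation `↝` of Definition 4, for distinct operations `π₁ ≠ π₂`:
(a) both have timestamps and `ts π₁ < ts π₂`; or (b) both have timestamps,
`ts π₁ = ts π₂`, and `π₁` is a write; or (c) both have timestamps, `ts π₁ = ts π₂`,
both are reads of the same client, and `π₁ → π₂` in program order; or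
(d) `π₁` has a timestamp and `π₂` does not. -/
def leadsTo {Op Client : Type*} {N : ℕ} (write read : Op → Prop) (cl : Op → Client)
    (prog : Op → Op → Prop) (ts : Op → Option (Fin N → ℕ)) (π₁ π₂ : Op) : Prop :=
  π₁ ≠ π₂ ∧
    ((∃ u₁ u₂ : Fin N → ℕ, ts π₁ = some u₁ ∧ ts π₂ = some u₂ ∧
        (u₁ < u₂ ∨
          (u₁ = u₂ ∧ write π₁) ∨
          (u₁ = u₂ ∧ read π₁ ∧ read π₂ ∧ cl π₁ = cl π₂ ∧ prog π₁ π₂))) ∨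
      ((∃ u₁ : Fin N → ℕ, ts π₁ = some u₁) ∧ ts π₂ = none))


/-!
The relation `↝` is the lexicographic order on pairs (timestamp, operation), where an undefined
timestamp counts as `⊤` and operations with equal timestamps are compared by the tie-break of
clauses (b) and (c). The tie-break is a strict order: two timestamped writes never share a
timestamp, so on a timestamp class there is at most one write, it comes first, and the reads
behind it are ordered by the program order, which is a strict order.
-/

section TieBreak

variable {Op Client : Type*} {N : ℕ} (write read : Op → Prop) (cl : Op → Client)
  (prog : Op → Op → Prop) (ts : Op → Option (Fin N → ℕ))

-- Clauses (b) and (c) of `leadsTo`.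
def sameStampTie (π₁ π₂ : Op) : Prop :=
  π₁ ≠ π₂ ∧ (∃ u : Fin N → ℕ, ts π₁ = some u ∧ ts π₂ = some u) ∧
    (write π₁ ∨ (read π₁ ∧ read π₂ ∧ cl π₁ = cl π₂ ∧ prog π₁ π₂))

-- With an undefined timestamp read as `⊤`, clauses (a) and (d) together say
-- `stamp ts π₁ < stamp ts π₂`.
def stamp (π : Op) : WithTop (Fin N → ℕ) := (ts π).elim ⊤ (↑)

theorem leadsTo_eq_preimage_lex :
    leadsTo write read cl prog ts =
      (fun π => (stamp ts π, π)) ⁻¹'o Prod.Lex (· < ·) (sameStampTie write read cl prog ts) := by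
  funext π₁ π₂
  by_cases h : π₁ = π₂
  · subst h
    simp [leadsTo, sameStampTie, Order.Preimage, Prod.lex_iff]
  · simp only [leadsTo, sameStampTie, stamp, Order.Preimage, Prod.lex_iff, ne_eq, h,
      not_false_eq_true, true_and]
    rcases ts π₁ with _ | u₁ <;> rcases ts π₂ with _ | u₂ <;> simp
    grind

variable {write read cl prog ts}

theorem sameStampTie_asymm (hwrite : ∀ π, write π → ¬ read π)
    (hwrite_inj : ∀ (π₁ π₂ : Op) (u₁ u₂ : Fin N → ℕ), write π₁ → write π₂ → π₁ ≠ π₂ →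
      ts π₁ = some u₁ → ts π₂ = some u₂ → u₁ ≠ u₂)
    (hasymm : ∀ π₁ π₂, prog π₁ π₂ → ¬ prog π₂ π₁) {π₁ π₂ : Op}
    (h : sameStampTie write read cl prog ts π₁ π₂) :
    ¬ sameStampTie write read cl prog ts π₂ π₁ := by
  obtain ⟨hne, ⟨u, h₁, h₂⟩, h₁₂⟩ := h
  rintro ⟨-, -, h₂₁⟩
  rcases h₁₂ with hw₁ | ⟨hr₁, hr₂, -, hp₁₂⟩ <;> rcases h₂₁ with hw₂ | ⟨-, hr₁, -, hp₂₁⟩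
  · exact hwrite_inj π₁ π₂ u u hw₁ hw₂ hne h₁ h₂ rfl
  · exact hwrite π₁ hw₁ hr₁
  · exact hwrite π₂ hw₂ hr₂
  · exact hasymm π₁ π₂ hp₁₂ hp₂₁

theorem sameStampTie_isStrictOrder (hwrite : ∀ π, write π → ¬ read π)
    (hwrite_inj : ∀ (π₁ π₂ : Op) (u₁ u₂ : Fin N → ℕ), write π₁ → write π₂ → π₁ ≠ π₂ →
      ts π₁ = some u₁ → ts π₂ = some u₂ → u₁ ≠ u₂)
    (hasymm : ∀ π₁ π₂, prog π₁ π₂ → ¬ prog π₂ π₁)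
    (htrans : ∀ π₁ π₂ π₃, prog π₁ π₂ → prog π₂ π₃ → prog π₁ π₃) :
    IsStrictOrder Op (sameStampTie write read cl prog ts) where
  irrefl _ h := h.1 rfl
  trans π₁ π₂ π₃ h₁₂ h₂₃ := by
    have hne : π₁ ≠ π₃ := by
      rintro rfl
      exact sameStampTie_asymm hwrite hwrite_inj hasymm h₁₂ h₂₃
    obtain ⟨-, ⟨u, h₁, h₂⟩, h₁₂⟩ := h₁₂
    obtain ⟨-, ⟨v, h₂', h₃⟩, h₂₃⟩ := h₂₃
    obtain rfl : u = v := Option.some.inj (h₂.symm.trans h₂')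
    refine ⟨hne, ⟨u, h₁, h₃⟩, ?_⟩
    rcases h₁₂ with hw₁ | ⟨hr₁, hr₂, hcl₁₂, hp₁₂⟩
    · exact .inl hw₁
    rcases h₂₃ with hw₂ | ⟨-, hr₃, hcl₂₃, hp₂₃⟩
    · exact absurd hr₂ (hwrite π₂ hw₂)
    exact .inr ⟨hr₁, hr₃, hcl₁₂.trans hcl₂₃, htrans π₁ π₂ π₃ hp₁₂ hp₂₃⟩

end TieBreak

theorem leadsTo_isStrictPartialOrder_general {Op Client : Type*} {N : ℕ}
    (write read : Op → Prop)
    (hwr : ∀ π : Op, (write π ∧ ¬ read π) ∨ (¬ write π ∧ read π))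
    (cl : Op → Client)
    (prog : Op → Op → Prop)
    (hprog_asymm : ∀ π₁ π₂ : Op, prog π₁ π₂ → ¬ prog π₂ π₁)
    (hprog_trans : ∀ π₁ π₂ π₃ : Op, prog π₁ π₂ → prog π₂ π₃ → prog π₁ π₃)
    (ts : Op → Option (Fin N → ℕ))
    (H1 : ∀ (π₁ π₂ : Op) (u₁ u₂ : Fin N → ℕ), write π₁ → write π₂ → π₁ ≠ π₂ →
      ts π₁ = some u₁ → ts π₂ = some u₂ → u₁ ≠ u₂) :
    (∀ π : Op, ¬ leadsTo write read cl prog ts π π) ∧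
    (∀ π₁ π₂ : Op, leadsTo write read cl prog ts π₁ π₂ →
      ¬ leadsTo write read cl prog ts π₂ π₁) ∧
    (∀ π₁ π₂ π₃ : Op, leadsTo write read cl prog ts π₁ π₂ →
      leadsTo write read cl prog ts π₂ π₃ → leadsTo write read cl prog ts π₁ π₃) := by
  have hwrite : ∀ π, write π → ¬ read π := fun π hw =>
    (hwr π).elim And.right fun h => absurd hw h.1
  have := sameStampTie_isStrictOrder (cl := cl) hwrite H1 hprog_asymm hprog_trans
  have : IsStrictOrder (WithTop (Fin N → ℕ) × Op)
      (Prod.Lex (· < ·) (sameStampTie write read cl prog ts)) := {}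
  have : IsStrictOrder Op (leadsTo write read cl prog ts) := by
    rw [leadsTo_eq_preimage_lex]
    infer_instance
  exact ⟨irrefl, fun _ _ => asymm, fun _ _ _ => _root_.trans⟩

/-- Abstract form of Lemma 4.3: for an abstract execution in which any two distinct
write operations possessing timestamps have distinct timestamps, the relation `↝`
of Definition 4 is a strict partial order: irreflexive, asymmetric, and transitive. -/
theorem leadsTo_isStrictPartialOrder {Op Client : Type*} {N : ℕ}
    (write read : Op → Prop)
    (hwr : ∀ π : Op, (write π ∧ ¬ read π) ∨ (¬ write π ∧ read π))
    (cl : Op → Client)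
    (prog : Op → Op → Prop)
    (hprog_asymm : ∀ π₁ π₂ : Op, prog π₁ π₂ → ¬ prog π₂ π₁)
    (hprog_trans : ∀ π₁ π₂ π₃ : Op, prog π₁ π₂ → prog π₂ π₃ → prog π₁ π₃)
    (hprog_cl : ∀ π₁ π₂ : Op, prog π₁ π₂ → cl π₁ = cl π₂)
    (ts : Op → Option (Fin N → ℕ))
    (H1 : ∀ (π₁ π₂ : Op) (u₁ u₂ : Fin N → ℕ), write π₁ → write π₂ → π₁ ≠ π₂ →
      ts π₁ = some u₁ → ts π₂ = some u₂ → u₁ ≠ u₂) :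
    (∀ π : Op, ¬ leadsTo write read cl prog ts π π) ∧
    (∀ π₁ π₂ : Op, leadsTo write read cl prog ts π₁ π₂ →
      ¬ leadsTo write read cl prog ts π₂ π₁) ∧
    (∀ π₁ π₂ π₃ : Op, leadsTo write read cl prog ts π₁ π₂ →
      leadsTo write read cl prog ts π₂ π₃ → leadsTo write read cl prog ts π₁ π₃) :=
  leadsTo_isStrictPartialOrder_general write read hwr cl prog hprog_asymm hprog_trans ts H1
end

section
/- (Abstract form of Theorem 4.1: CausalEC satisfies causal consistency, with the algorithm-derived facts taken as hypotheses.) For an abstract execution as in the context, equipped additionally with functions obj (the object of an operation) and val (the value written by a write or returned by a read), assume: (H1) any two distinct write operations possessing timestamps have distinct timestamps; (H2) whenever π₁ → π₂, the operation π₁ has a timestamp, and if π₂ also has a timestamp then ts(π₁) ≤ ts(π₂), and moreover ts(π₁) = ts(π₂) implies that π₂ is a read; (H3) every read π possessing a timestamp satisfies: there exists a write φ possessing a timestamp with obj(φ) = obj(π), val(φ) = val(π), and ts(φ) ≤ ts(π). Then the relation ↝ of Definition 4 witnesses causal consistency: (1) π₁ → π₂ implies π₁ ↝ π₂; and (2)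 for every read π₁ possessing a timestamp there exists a write π₂ such that obj(π₂) = obj(π₁), val(π₂) = val(π₁), π₂ ↝ π₁, and for every write π₃ with π₂ ↝ π₃ ↝ π₁ it is not the case that both obj(π₃) = obj(π₁) and val(π₃) = val(π₁). (The proof of (2) uses that the set of writes to obj(π₁) with value val(π₁) and timestamp ≤ ts(π₁) is nonempty by (H3) and finite, since timestamps of distinct writes are distinct elements of ℕ^N bounded above by ts(π₁); a timestamp-maximal element of this set serves as π₂.) -/
/-! A write that π₁ reads from is chosen with maximal timestamp among the matching writes
below `ts π₁`; there are finitely many candidate timestamps, since they lie in the interval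
below `ts π₁` of the locally finite order `ℕ^N`. Timestamps are monotone along `↝`, so a
matching write `π₃` with `π₂ ↝ π₃ ↝ π₁` would have a timestamp between those of `π₂` and
`π₁`, hence equal to that of `π₂` by maximality, contradicting (H1). -/

section LeadsTo

variable {Op Client : Type*} {N : ℕ} {write read : Op → Prop} {cl : Op → Client}
  {prog : Op → Op → Prop} {ts : Op → Option (Fin N → ℕ)} {π₁ π₂ : Op}

theorem leadsTo.exists_ts_le {u₂ : Fin N → ℕ} (h : leadsTo write read cl prog ts π₁ π₂)
    (hts₂ : ts π₂ = some u₂) : ∃ u₁, ts π₁ = some u₁ ∧ u₁ ≤ u₂ := by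
  obtain ⟨-, ⟨u₁, u₂', hts₁, hts₂', hcase⟩ | ⟨-, hnone⟩⟩ := h
  · obtain rfl : u₂' = u₂ := Option.some_injective _ (hts₂'.symm.trans hts₂)
    refine ⟨u₁, hts₁, ?_⟩
    rcases hcase with hlt | ⟨rfl, -⟩ | ⟨rfl, -⟩
    exacts [hlt.le, le_rfl, le_rfl]
  · simp [hts₂] at hnone

theorem leadsTo_of_write_of_le {u₁ u₂ : Fin N → ℕ} (hne : π₁ ≠ π₂) (hw : write π₁)
    (hts₁ : ts π₁ = some u₁) (hts₂ : ts π₂ = some u₂) (hle : u₁ ≤ u₂) :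
    leadsTo write read cl prog ts π₁ π₂ :=
  ⟨hne, .inl ⟨u₁, u₂, hts₁, hts₂, hle.lt_or_eq.imp_right fun h => .inl ⟨h, hw⟩⟩⟩

theorem leadsTo_of_prog {u₁ : Fin N → ℕ} (hne : π₁ ≠ π₂) (hp : prog π₁ π₂)
    (hcl : cl π₁ = cl π₂) (hwr : write π₁ ∨ read π₁) (hts₁ : ts π₁ = some u₁)
    (hle : ∀ u₂, ts π₂ = some u₂ → u₁ ≤ u₂ ∧ (u₁ = u₂ → read π₂)) :
    leadsTo write read cl prog ts π₁ π₂ := by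
  cases hts₂ : ts π₂ with
  | none => exact ⟨hne, .inr ⟨⟨u₁, hts₁⟩, hts₂⟩⟩
  | some u₂ =>
    obtain ⟨hu, hread₂⟩ := hle u₂ hts₂
    rcases hwr with hw | hr
    · exact leadsTo_of_write_of_le hne hw hts₁ hts₂ hu
    · refine ⟨hne, .inl ⟨u₁, u₂, hts₁, hts₂, ?_⟩⟩
      exact hu.lt_or_eq.imp_right fun h => .inr ⟨h, hr, hread₂ h, hcl, hp⟩

end LeadsTo

theorem exists_maximal_ts_le {Op α : Type*} [PartialOrder α] [LocallyFiniteOrderBot α]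
    {ts : Op → Option α} {P : Op → Prop} {φ : Op} {uφ u : α} (hφ : P φ)
    (htsφ : ts φ = some uφ) (hle : uφ ≤ u) :
    ∃ ψ v, P ψ ∧ ts ψ = some v ∧ v ≤ u ∧
      ∀ ψ' w, P ψ' → ts ψ' = some w → w ≤ u → v ≤ w → w = v := by
  set T : Set α := {v | v ≤ u ∧ ∃ ψ, P ψ ∧ ts ψ = some v}
  have hT : T.Finite := (Set.finite_Iic u).subset fun _ hv => hv.1
  obtain ⟨v, ⟨hvu, ψ, hψ, htsψ⟩, hmax⟩ := hT.exists_maximal ⟨uφ, hle, φ, hφ, htsφ⟩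
  exact ⟨ψ, v, hψ, htsψ, hvu, fun ψ' w hψ' hts' hwu hvw =>
    le_antisymm (hmax ⟨hwu, ψ', hψ', hts'⟩ hvw) hvw⟩

theorem causalEC_causally_consistent_general {Op Client X V : Type*} {N : ℕ}
    (write read : Op → Prop)
    (hwr : ∀ π : Op, (write π ∧ ¬ read π) ∨ (¬ write π ∧ read π))
    (cl : Op → Client)
    (prog : Op → Op → Prop)
    (hprog_asymm : ∀ π₁ π₂ : Op, prog π₁ π₂ → ¬ prog π₂ π₁)
    (hprog_cl : ∀ π₁ π₂ : Op, prog π₁ π₂ → cl π₁ = cl π₂)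
    (ts : Op → Option (Fin N → ℕ))
    (obj : Op → X) (val : Op → V)
    (H1 : ∀ (π₁ π₂ : Op) (u₁ u₂ : Fin N → ℕ), write π₁ → write π₂ → π₁ ≠ π₂ →
      ts π₁ = some u₁ → ts π₂ = some u₂ → u₁ ≠ u₂)
    (H2 : ∀ π₁ π₂ : Op, prog π₁ π₂ →
      ∃ u₁ : Fin N → ℕ, ts π₁ = some u₁ ∧
        ∀ u₂ : Fin N → ℕ, ts π₂ = some u₂ → u₁ ≤ u₂ ∧ (u₁ = u₂ → read π₂))
    (H3 : ∀ π : Op, read π → ∀ u : Fin N → ℕ, ts π = some u →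
      ∃ (φ : Op) (uφ : Fin N → ℕ), write φ ∧ ts φ = some uφ ∧
        obj φ = obj π ∧ val φ = val π ∧ uφ ≤ u) :
    (∀ π₁ π₂ : Op, prog π₁ π₂ → leadsTo write read cl prog ts π₁ π₂) ∧
    (∀ (π₁ : Op) (u : Fin N → ℕ), read π₁ → ts π₁ = some u →
      ∃ π₂ : Op, write π₂ ∧ obj π₂ = obj π₁ ∧ val π₂ = val π₁ ∧
        leadsTo write read cl prog ts π₂ π₁ ∧
        ∀ π₃ : Op, write π₃ → leadsTo write read cl prog ts π₂ π₃ →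
          leadsTo write read cl prog ts π₃ π₁ →
          ¬ (obj π₃ = obj π₁ ∧ val π₃ = val π₁)) := by
  refine ⟨fun π₁ π₂ hp => ?_, fun π₁ u hr hts => ?_⟩
  · obtain ⟨u₁, hts₁, hle⟩ := H2 π₁ π₂ hp
    exact leadsTo_of_prog (fun h => hprog_asymm _ _ hp (h ▸ hp)) hp (hprog_cl _ _ hp)
      ((hwr π₁).imp And.left And.right) hts₁ hle
  obtain ⟨φ, uφ, hwφ, htsφ, hobjφ, hvalφ, hle⟩ := H3 π₁ hr u hts
  obtain ⟨π₂, v, ⟨hw₂, hobj₂, hval₂⟩, hts₂, hvu, hmax⟩ :=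
    exists_maximal_ts_le (P := fun ψ => write ψ ∧ obj ψ = obj π₁ ∧ val ψ = val π₁)
      ⟨hwφ, hobjφ, hvalφ⟩ htsφ hle
  have hne : π₂ ≠ π₁ := by
    rintro rfl
    rcases hwr π₂ with ⟨-, hnr⟩ | ⟨hnw, -⟩
    exacts [hnr hr, hnw hw₂]
  refine ⟨π₂, hw₂, hobj₂, hval₂, leadsTo_of_write_of_le hne hw₂ hts₂ hts hvu, ?_⟩
  rintro π₃ hw₃ h₂₃ h₃₁ ⟨hobj₃, hval₃⟩
  obtain ⟨u₃, hts₃, hu₃⟩ := h₃₁.exists_ts_le hts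
  obtain ⟨v', hts₂', hvu₃⟩ := h₂₃.exists_ts_le hts₃
  obtain rfl : v = v' := Option.some_injective _ (hts₂.symm.trans hts₂')
  exact H1 π₂ π₃ v u₃ hw₂ hw₃ h₂₃.1 hts₂ hts₃
    (hmax π₃ u₃ ⟨hw₃, hobj₃, hval₃⟩ hts₃ hu₃ hvu₃).symm

/-- Abstract form of Theorem 4.1 (CausalEC satisfies causal consistency): under the
algorithm-derived hypotheses (H1)-(H3), the relation `↝` of Definition 4 witnesses
causal consistency: (1) program order implies `↝`; and (2) every read possessing a
timestamp returns the value of a write `π₂` with `π₂ ↝ π₁`, on the same object with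
the same value, such that no write `π₃` with `π₂ ↝ π₃ ↝ π₁` is on the same object
with the same value. -/
theorem causalEC_causally_consistent {Op Client X V : Type*} {N : ℕ}
    (write read : Op → Prop)
    (hwr : ∀ π : Op, (write π ∧ ¬ read π) ∨ (¬ write π ∧ read π))
    (cl : Op → Client)
    (prog : Op → Op → Prop)
    (hprog_asymm : ∀ π₁ π₂ : Op, prog π₁ π₂ → ¬ prog π₂ π₁)
    (hprog_trans : ∀ π₁ π₂ π₃ : Op, prog π₁ π₂ → prog π₂ π₃ → prog π₁ π₃)
    (hprog_cl : ∀ π₁ π₂ : Op, prog π₁ π₂ → cl π₁ = cl π₂)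
    (ts : Op → Option (Fin N → ℕ))
    (obj : Op → X) (val : Op → V)
    (H1 : ∀ (π₁ π₂ : Op) (u₁ u₂ : Fin N → ℕ), write π₁ → write π₂ → π₁ ≠ π₂ →
      ts π₁ = some u₁ → ts π₂ = some u₂ → u₁ ≠ u₂)
    (H2 : ∀ π₁ π₂ : Op, prog π₁ π₂ →
      ∃ u₁ : Fin N → ℕ, ts π₁ = some u₁ ∧
        ∀ u₂ : Fin N → ℕ, ts π₂ = some u₂ → u₁ ≤ u₂ ∧ (u₁ = u₂ → read π₂))
    (H3 : ∀ π : Op, read π → ∀ u : Fin N → ℕ, ts π = some u →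
      ∃ (φ : Op) (uφ : Fin N → ℕ), write φ ∧ ts φ = some uφ ∧
        obj φ = obj π ∧ val φ = val π ∧ uφ ≤ u) :
    (∀ π₁ π₂ : Op, prog π₁ π₂ → leadsTo write read cl prog ts π₁ π₂) ∧
    (∀ (π₁ : Op) (u : Fin N → ℕ), read π₁ → ts π₁ = some u →
      ∃ π₂ : Op, write π₂ ∧ obj π₂ = obj π₁ ∧ val π₂ = val π₁ ∧
        leadsTo write read cl prog ts π₂ π₁ ∧
        ∀ π₃ : Op, write π₃ → leadsTo write read cl prog ts π₂ π₃ →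
          leadsTo write read cl prog ts π₃ π₁ →
          ¬ (obj π₃ = obj π₁ ∧ val π₃ = val π₁)) :=
  causalEC_causally_consistent_general write read hwr cl prog hprog_asymm hprog_cl ts obj val H1 H2
    H3
end
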